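/- (Théorème fondamental 3.3.4) Let (φ, H, r) be a Dallajascar on a finite nonempty type S and (θ, K, s) a Dallajascar on a finite nonempty type T. Then (φ, H, r) and (θ, K, s) are equivalent if and only if M(φ,H) = M(θ,K). -/

import Mathlib

/-- A *Dallajascar* on a finite nonempty type `S`: a parent function `phi : S → Option S`,
an ordered-children function `H : S → List S`, and a root `r : S`, such that
(i) `phi r = none`; (ii) `phi x ≠ none` for `x ≠ r`; (iii) the transitive closure of the
parent relation is irreflexive; (iv) `H x` is a duplicate-free list whose members are
exactly the `y` with `phi y = some x`. -/
structure Dallajascar (S : Type*) [Fintype S] [Nonempty S] where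
  phi : S → Option S
  H : S → List S
  r : S
  phi_root : phi r = none
  phi_ne_none : ∀ x : S, x ≠ r → phi x ≠ none
  acyclic : ∀ x : S, ¬ Relation.TransGen (fun y z => phi y = some z) x x
  H_nodup : ∀ x : S, (H x).Nodup
  mem_H : ∀ x y : S, y ∈ H x ↔ phi y = some x

namespace Dallajascar

variable {S : Type*} [Fintype S] [Nonempty S]

/-- The parent relation: `P D y x` iff `x` is the parent of `y`. -/
def P (D : Dallajascar S) (y x : S) : Prop := D.phi y = some x

/-- The parent relation is well-founded. -/
theorem wfP (D : Dallajascar S) : WellFounded D.P := by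
  haveI : IsTrans S (Relation.TransGen D.P) := ⟨fun _ _ _ h₁ h₂ => h₁.trans h₂⟩
  haveI : IsIrrefl S (Relation.TransGen D.P) := ⟨D.acyclic⟩
  exact Subrelation.wf (r := Relation.TransGen D.P)
    (fun {x y} h => Relation.TransGen.single h)
    (Finite.wellFounded_of_trans_of_irrefl _)

/-- `W D x` : the word over `{true (open), false (close)}` associated with the subtree
rooted at `x`, defined by well-founded recursion:
`W x = true :: (((H x).map W).flatten ++ [false])`. -/
noncomputable def W (D : Dallajascar S) : S → List Bool :=
  D.wfP.fix fun x ih =>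
    true :: ((((D.H x).attach.map fun (y : {y : S // y ∈ D.H x}) =>
      ih y.1 ((D.mem_H x y.1).1 y.2)).flatten) ++ [false])

/-- `M(φ,H)` : the Jassological word of the Dallajascar. -/
noncomputable def MJword (D : Dallajascar S) : List Bool := D.W D.r

end Dallajascar


/-!
Give `true` weight `1` and `false` weight `-1`. Every word `W x` is a prime Dyck word: it has
weight `0` and every nonempty proper prefix has positive weight. A concatenation of prime Dyck
words therefore factors uniquely, so `W x` determines the list of words of the children of `x`.
If the two Jassological words agree, the nodes reached from the roots along the same sequence of
child indices thus carry equal words, and matching them gives the equivalence. Conversely, an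
equivalence maps root to root and commutes with `W`.
-/

namespace ParenWord

def weight (w : List Bool) : ℤ := (w.map fun b => if b then 1 else -1).sum

@[simp]
theorem weight_nil : weight [] = 0 := rfl

@[simp]
theorem weight_cons (b : Bool) (w : List Bool) :
    weight (b :: w) = (if b then 1 else -1) + weight w := by
  simp [weight]

@[simp]
theorem weight_append (u v : List Bool) : weight (u ++ v) = weight u + weight v := by
  simp [weight]

def IsBalanced (w : List Bool) : Prop :=
  weight w = 0 ∧ ∀ p, p <+: w → 0 ≤ weight p

def IsPrime (w : List Bool) : Prop :=
  w ≠ [] ∧ weight w = 0 ∧ ∀ p, p <+: w → p ≠ [] → p ≠ w → 0 < weight p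

variable {u v : List Bool}

theorem isBalanced_nil : IsBalanced [] :=
  ⟨rfl, fun p hp => by simp [List.prefix_nil.mp hp]⟩

theorem IsPrime.isBalanced (h : IsPrime u) : IsBalanced u := by
  refine ⟨h.2.1, fun p hp => ?_⟩
  rcases eq_or_ne p [] with rfl | hne
  · simp
  rcases eq_or_ne p u with rfl | hne'
  · exact h.2.1.ge
  exact (h.2.2 p hp hne hne').le

theorem IsBalanced.append (hu : IsBalanced u) (hv : IsBalanced v) : IsBalanced (u ++ v) := by
  refine ⟨by simp [hu.1, hv.1], fun p hp => ?_⟩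
  rcases List.prefix_or_prefix_of_prefix hp (List.prefix_append u v) with hpu | ⟨q, rfl⟩
  · exact hu.2 p hpu
  · rw [weight_append, hu.1, zero_add]
    exact hv.2 q ((List.prefix_append_right_inj u).mp hp)

theorem isBalanced_flatten {L : List (List Bool)} (h : ∀ w ∈ L, IsPrime w) :
    IsBalanced L.flatten := by
  induction L with
  | nil => exact isBalanced_nil
  | cons w L ih =>
    rw [List.forall_mem_cons] at h
    exact h.1.isBalanced.append (ih h.2)

theorem IsBalanced.isPrime_wrap (hu : IsBalanced u) : IsPrime (true :: (u ++ [false])) := by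
  refine ⟨List.cons_ne_nil _ _, by simp [hu.1], fun p hp hne hne' => ?_⟩
  obtain ⟨q, rfl, hq⟩ := (List.prefix_cons_iff.mp hp).resolve_left hne
  have hqu : q <+: u := (List.prefix_concat_iff.mp hq).resolve_left (by rintro rfl; exact hne' rfl)
  have := hu.2 q hqu
  simp only [weight_cons, if_true]
  omega

theorem IsPrime.eq_of_prefix (hu : IsPrime u) (hv : IsPrime v) (h : u <+: v) : u = v := by
  by_contra hne
  exact (hv.2.2 u h hu.1 hne).ne' hu.2.1

theorem eq_of_flatten_eq {L₁ L₂ : List (List Bool)} (h₁ : ∀ w ∈ L₁, IsPrime w)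
    (h₂ : ∀ w ∈ L₂, IsPrime w) (h : L₁.flatten = L₂.flatten) : L₁ = L₂ := by
  induction L₁ generalizing L₂ with
  | nil =>
    cases L₂ with
    | nil => rfl
    | cons v L₂ => exact absurd (List.append_eq_nil_iff.mp h.symm).1 (h₂ v (by simp)).1
  | cons u L₁ ih =>
    cases L₂ with
    | nil => exact absurd (List.append_eq_nil_iff.mp h).1 (h₁ u (by simp)).1
    | cons v L₂ =>
      simp only [List.forall_mem_cons, List.flatten_cons] at h₁ h₂ h
      obtain rfl : u = v := by
        rcases List.prefix_or_prefix_of_prefix (List.prefix_append u _)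
            (h ▸ List.prefix_append v _) with huv | hvu
        · exact h₁.1.eq_of_prefix h₂.1 huv
        · exact (h₂.1.eq_of_prefix h₁.1 hvu).symm
      rw [ih h₁.2 h₂.2 (List.append_cancel_left h)]

end ParenWord

namespace Dallajascar

variable {S T : Type*} [Fintype S] [Nonempty S] [Fintype T] [Nonempty T]

theorem wellFounded_swap_P (D : Dallajascar S) : WellFounded (Function.swap D.P) := by
  have : IsTrans S (Relation.TransGen (Function.swap D.P)) :=
    ⟨fun _ _ _ => Relation.TransGen.trans⟩
  have : Std.Irrefl (Relation.TransGen (Function.swap D.P)) :=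
    ⟨fun x hx => D.acyclic x (Relation.transGen_swap.mp hx)⟩
  exact Subrelation.wf Relation.TransGen.single (Finite.wellFounded_of_trans_of_irrefl _)

theorem ne_root_of_mem_H {D : Dallajascar S} {x y : S} (h : y ∈ D.H x) : y ≠ D.r := by
  rintro rfl
  simp [D.mem_H, D.phi_root] at h

theorem eq_of_mem_H {D : Dallajascar S} {x x' y : S} (h : y ∈ D.H x) (h' : y ∈ D.H x') :
    x = x' :=
  Option.some.inj (((D.mem_H x y).mp h).symm.trans ((D.mem_H x' y).mp h'))

theorem exists_mem_H_of_ne_root {D : Dallajascar S} {y : S} (h : y ≠ D.r) :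
    ∃ x, y ∈ D.H x := by
  obtain ⟨x, hx⟩ := Option.ne_none_iff_exists'.mp (D.phi_ne_none y h)
  exact ⟨x, (D.mem_H x y).mpr hx⟩

theorem W_eq (D : Dallajascar S) (x : S) :
    D.W x = true :: (((D.H x).map D.W).flatten ++ [false]) := by
  rw [W, WellFounded.fix_eq]
  simp only [List.attach_map_val]

theorem isPrime_W (D : Dallajascar S) (x : S) : ParenWord.IsPrime (D.W x) := by
  induction x using WellFounded.induction D.wfP with
  | _ x ih =>
    rw [W_eq]
    refine (ParenWord.isBalanced_flatten ?_).isPrime_wrap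
    simp only [List.forall_mem_map]
    exact fun y hy => ih y ((D.mem_H x y).mp hy)

theorem map_W_H_eq_of_W_eq {D₁ : Dallajascar S} {D₂ : Dallajascar T} {x : S} {y : T}
    (h : D₁.W x = D₂.W y) : (D₁.H x).map D₁.W = (D₂.H y).map D₂.W := by
  rw [W_eq, W_eq, List.cons_inj_right, List.append_left_inj] at h
  exact ParenWord.eq_of_flatten_eq (by simp [isPrime_W]) (by simp [isPrime_W]) h

theorem length_H_eq_of_W_eq {D₁ : Dallajascar S} {D₂ : Dallajascar T} {x : S} {y : T}
    (h : D₁.W x = D₂.W y) : (D₁.H x).length = (D₂.H y).length := by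
  simpa using congrArg List.length (map_W_H_eq_of_W_eq h)

section Equivalence

variable {D₁ : Dallajascar S} {D₂ : Dallajascar T} (f : S ≃ T)

theorem map_root_of_H_map (hf : ∀ a, D₂.H (f a) = (D₁.H a).map f) : f D₁.r = D₂.r := by
  by_contra hne
  obtain ⟨x, hx⟩ := exists_mem_H_of_ne_root hne
  rw [← f.apply_symm_apply x, hf, List.mem_map_of_injective f.injective] at hx
  exact ne_root_of_mem_H hx rfl

theorem W_map_of_H_map (hf : ∀ a, D₂.H (f a) = (D₁.H a).map f) (x : S) :
    D₂.W (f x) = D₁.W x := by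
  induction x using WellFounded.induction D₁.wfP with
  | _ x ih =>
    rw [W_eq, W_eq, hf, List.map_map]
    congr 3
    exact List.map_congr_left fun y hy => ih y ((D₁.mem_H x y).mp hy)

theorem MJword_eq_of_H_map (hf : ∀ a, D₂.H (f a) = (D₁.H a).map f) :
    D₁.MJword = D₂.MJword := by
  rw [MJword, MJword, ← map_root_of_H_map f hf, W_map_of_H_map f hf]

end Equivalence

inductive SameAddress (D₁ : Dallajascar S) (D₂ : Dallajascar T) : S → T → Prop
  | root : SameAddress D₁ D₂ D₁.r D₂.r
  | child {a : S} {b : T} (h : SameAddress D₁ D₂ a b) (i : ℕ) (h₁ : i < (D₁.H a).length)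
      (h₂ : i < (D₂.H b).length) : SameAddress D₁ D₂ (D₁.H a)[i] (D₂.H b)[i]

namespace SameAddress

variable {D₁ : Dallajascar S} {D₂ : Dallajascar T} {a a' : S} {b b' : T}

theorem symm (h : SameAddress D₁ D₂ a b) : SameAddress D₂ D₁ b a := by
  induction h with
  | root => exact root
  | child _ i h₁ h₂ ih => exact ih.child i h₂ h₁

theorem right_unique (h : SameAddress D₁ D₂ a b) (h' : SameAddress D₁ D₂ a' b') (ha : a = a') :
    b = b' := by
  induction h generalizing a' b' with
  | root =>
    cases h' with
    | root => rfl
    | child _ i h₁ _ => exact absurd ha (ne_root_of_mem_H (List.getElem_mem h₁)).symm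
  | child _ i h₁ _ ih =>
    cases h' with
    | root => exact absurd ha (ne_root_of_mem_H (List.getElem_mem h₁))
    | child h' j h₁' _ =>
      obtain rfl := eq_of_mem_H (List.getElem_mem h₁) (ha ▸ List.getElem_mem h₁')
      obtain rfl := (D₁.H_nodup _).getElem_inj_iff.mp ha
      obtain rfl := ih h' rfl
      rfl

theorem W_eq (hM : D₁.MJword = D₂.MJword) (h : SameAddress D₁ D₂ a b) : D₁.W a = D₂.W b := by
  induction h with
  | root => exact hM
  | child _ i h₁ _ ih =>
    have := List.getElem_of_eq (map_W_H_eq_of_W_eq ih) (by simpa using h₁)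
    rwa [List.getElem_map, List.getElem_map] at this

theorem exists_right (hM : D₁.MJword = D₂.MJword) (a : S) : ∃ b, SameAddress D₁ D₂ a b := by
  induction a using WellFounded.induction D₁.wellFounded_swap_P with
  | _ a ih =>
    by_cases ha : a = D₁.r
    · exact ⟨D₂.r, ha ▸ root⟩
    obtain ⟨p, hp⟩ := exists_mem_H_of_ne_root ha
    obtain ⟨b, hb⟩ := ih p ((D₁.mem_H p a).mp hp)
    obtain ⟨i, hi, rfl⟩ := List.getElem_of_mem hp
    exact ⟨_, hb.child i hi (length_H_eq_of_W_eq (hb.W_eq hM) ▸ hi)⟩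

end SameAddress

theorem exists_H_map_of_MJword_eq {D₁ : Dallajascar S} {D₂ : Dallajascar T}
    (hM : D₁.MJword = D₂.MJword) : ∃ f : S ≃ T, ∀ a, D₂.H (f a) = (D₁.H a).map f := by
  choose f hf using SameAddress.exists_right hM
  choose g hg using SameAddress.exists_right hM.symm
  let e : S ≃ T :=
    { toFun := f
      invFun := g
      left_inv := fun a => ((hf a).symm.right_unique (hg (f a)) rfl).symm
      right_inv := fun b => (hf (g b)).right_unique (hg b).symm rfl }
  refine ⟨e, fun a => List.ext_getElem ?_ fun i h₁ h₂ => ?_⟩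
  · rw [List.length_map]
    exact (length_H_eq_of_W_eq ((hf a).W_eq hM)).symm
  · rw [List.getElem_map]
    exact ((hf a).child i (by simpa using h₂) h₁).right_unique (hf _) rfl

end Dallajascar

/-- Théorème fondamental 3.3.4: two Dallajascars are equivalent if and only if they have
the same Jassological word. -/
theorem equiv_iff_mjword_eq {S T : Type*} [Fintype S] [Nonempty S] [Fintype T]
    [Nonempty T] (D₁ : Dallajascar S) (D₂ : Dallajascar T) :
    (∃ f : S ≃ T, ∀ a : S, D₂.H (f a) = (D₁.H a).map f) ↔ D₁.MJword = D₂.MJword :=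
  ⟨fun ⟨f, hf⟩ => Dallajascar.MJword_eq_of_H_map f hf, Dallajascar.exists_H_map_of_MJword_eq⟩
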